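/- Inverse theorem for U³(𝔽₅ⁿ), converse direction: Let W ≤ 𝔽₅ⁿ be a linear subspace, let f : 𝔽₅ⁿ → ℂ be any function, let y ∈ 𝔽₅ⁿ, and let φ be a locally quadratic phase function on the coset y + W. Then ‖f‖_{U³(𝔽₅ⁿ)} ≥ 5^{−n} |W| · |𝔼_{x∈y+W} f(x) e(−φ(x))|. -/

import Mathlib

open Finset

/-- The exponential map `e : ℝ/ℤ → ℂ`, `e(θ) = e^{2πiθ}`. -/
noncomputable def ee (θ : AddCircle (1 : ℝ)) : ℂ := (AddCircle.toCircle θ : ℂ)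

/-- The Gowers uniformity norm `‖f‖_{U^d(G)}` of a function `f : G → ℂ` on a finite
additive group `G`. -/
noncomputable def gowersNorm {G : Type*} [AddCommGroup G] [Fintype G] (d : ℕ) (f : G → ℂ) : ℝ :=
  ‖(((Fintype.card G : ℂ) ^ (d + 1))⁻¹ *
        ∑ x : G, ∑ h : Fin d → G, ∏ ω : Fin d → Bool,
          (((starRingEnd ℂ) : ℂ → ℂ)^[(univ.filter fun i => ω i = true).card]
            (f (x + ∑ i ∈ univ.filter (fun i => ω i = true), h i))))‖ ^
    (((2 : ℝ) ^ d)⁻¹)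

/-- The average `𝔼_{x ∈ B} f(x)` of `f : G → ℂ` over a subset `B` of a finite type `G`. -/
noncomputable def expectC {G : Type*} [Fintype G] (B : Set G) (f : G → ℂ) : ℂ :=
  (B.ncard : ℂ)⁻¹ * ∑ x ∈ B.toFinite.toFinset, f x

/-- `φ : G → ℝ/ℤ` is a locally quadratic phase function on `B ⊆ G`. -/
def IsQuadraticOn {G : Type*} [AddCommGroup G] (B : Set G) (φ : G → AddCircle (1 : ℝ)) : Prop :=
  ∀ x h₁ h₂ h₃ : G,
    (∀ ω₁ ω₂ ω₃ : Bool, x + (cond ω₁ h₁ 0) + (cond ω₂ h₂ 0) + (cond ω₃ h₃ 0) ∈ B) →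
    φ (x + h₁ + h₂ + h₃) - φ (x + h₁ + h₂) - φ (x + h₁ + h₃) - φ (x + h₂ + h₃)
      + φ (x + h₁) + φ (x + h₂) + φ (x + h₃) - φ x = 0


/-! Let `γ = 1_{y+W} · e(φ)`. On every cube `x, x + h₁, …, x + h₁ + h₂ + h₃` whose vertices lie in
the coset `y + W` (equivalently `x ∈ y + W`, `hᵢ ∈ W`), local quadraticity makes the alternating
product of the phases `γ`, `γ̄` at the seven vertices other than `x` equal to `e(-φ x)`, and it
vanishes on every other cube. Hence the Gowers inner product of `f` against seven copies of `γ`, `γ̄`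
is `|W|³ ∑_{x ∈ y+W} f(x) e(-φ(x))`. Three applications of Cauchy–Schwarz, one in each direction of
the cube (the Gowers–Cauchy–Schwarz argument), bound its eighth power by the Gowers sum of `f` times
Gowers sums of `γ`, each of which equals `|W|⁴`; it remains to use `|W| ≤ |G|`. -/

@[to_additive]
lemma Fintype.prod_fin_succ_pi {α M : Type*} [Fintype α] [CommMonoid M] {n : ℕ}
    (F : (Fin (n + 1) → α) → M) : ∏ h, F h = ∏ a, ∏ t : Fin n → α, F (Fin.cons a t) := by
  rw [← Fintype.prod_prod_type']
  exact (Fintype.prod_equiv (Fin.consEquiv fun _ => α) _ _ fun _ => rfl).symm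

lemma norm_sum_mul_sq_le {ι : Type*} (s : Finset ι) (P Q : ι → ℂ) :
    ‖∑ i ∈ s, P i * Q i‖ ^ 2 ≤ (∑ i ∈ s, ‖P i‖ ^ 2) * ∑ i ∈ s, ‖Q i‖ ^ 2 :=
  calc ‖∑ i ∈ s, P i * Q i‖ ^ 2 ≤ (∑ i ∈ s, ‖P i‖ * ‖Q i‖) ^ 2 := by
        gcongr; exact (norm_sum_le _ _).trans_eq (by simp only [norm_mul])
    _ ≤ _ := sum_mul_sq_le_sq_mul_sq _ _ _

lemma ee_add (a b : AddCircle (1 : ℝ)) : ee (a + b) = ee a * ee b := by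
  simp [ee, AddCircle.toCircle_add]

lemma star_ee (a : AddCircle (1 : ℝ)) : star (ee a) = ee (-a) := by
  rw [ee, ee, AddCircle.toCircle_neg, Circle.coe_inv_eq_conj, Complex.star_def]

section CubeSum

variable {G : Type*} [AddCommGroup G] [Fintype G]

def squareSum (F₀ F₁ F₂ F₃ : G → ℂ) (h₁ h₂ : G) : ℂ :=
  ∑ x, F₀ x * F₁ (x + h₁) * F₂ (x + h₂) * F₃ (x + h₁ + h₂)

def cubeSum (F₀ F₁ F₂ F₃ F₄ F₅ F₆ F₇ : G → ℂ) : ℂ :=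
  ∑ x, ∑ h₁, ∑ h₂, ∑ h₃, F₀ x * F₁ (x + h₁) * F₂ (x + h₂) * F₃ (x + h₁ + h₂) *
    F₄ (x + h₃) * F₅ (x + h₁ + h₃) * F₆ (x + h₂ + h₃) * F₇ (x + h₁ + h₂ + h₃)

variable (F₀ F₁ F₂ F₃ F₄ F₅ F₆ F₇ : G → ℂ)

lemma cubeSum_eq_sum_squareSum_mul_squareSum :
    cubeSum F₀ F₁ F₂ F₃ F₄ F₅ F₆ F₇ =
      ∑ h₁, ∑ h₂, squareSum F₀ F₁ F₂ F₃ h₁ h₂ * squareSum F₄ F₅ F₆ F₇ h₁ h₂ := by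
  rw [cubeSum, Finset.sum_comm]
  refine Finset.sum_congr rfl fun h₁ _ => ?_
  rw [Finset.sum_comm]
  refine Finset.sum_congr rfl fun h₂ _ => ?_
  rw [squareSum, squareSum, Finset.sum_mul]
  refine Finset.sum_congr rfl fun x _ => ?_
  rw [Finset.mul_sum]
  refine Fintype.sum_equiv (Equiv.addLeft x) _ _ fun h₃ => ?_
  simp only [Equiv.coe_addLeft, add_right_comm _ h₃]
  ring

lemma star_squareSum (h₁ h₂ : G) :
    star (squareSum F₀ F₁ F₂ F₃ h₁ h₂) =
      squareSum (star F₀) (star F₁) (star F₂) (star F₃) h₁ h₂ := by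
  simp [squareSum, star_sum, star_mul']

lemma star_cubeSum :
    star (cubeSum F₀ F₁ F₂ F₃ F₄ F₅ F₆ F₇) =
      cubeSum (star F₀) (star F₁) (star F₂) (star F₃) (star F₄) (star F₅) (star F₆) (star F₇) := by
  simp [cubeSum, star_sum, star_mul']

lemma cubeSum_comm_two_three :
    cubeSum F₀ F₁ F₂ F₃ F₄ F₅ F₆ F₇ = cubeSum F₀ F₁ F₄ F₅ F₂ F₃ F₆ F₇ := by
  unfold cubeSum
  refine Finset.sum_congr rfl fun x _ => Finset.sum_congr rfl fun h₁ _ => ?_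
  rw [Finset.sum_comm]
  refine Finset.sum_congr rfl fun h₃ _ => Finset.sum_congr rfl fun h₂ _ => ?_
  simp only [add_right_comm _ h₂ h₃]
  ring

lemma cubeSum_comm_one_three :
    cubeSum F₀ F₁ F₂ F₃ F₄ F₅ F₆ F₇ = cubeSum F₀ F₄ F₂ F₆ F₁ F₅ F₃ F₇ := by
  unfold cubeSum
  refine Finset.sum_congr rfl fun x _ => ?_
  refine (Finset.sum_congr rfl fun h₁ _ => Finset.sum_comm).trans ?_
  rw [Finset.sum_comm]
  refine Finset.sum_congr rfl fun h₃ _ => ?_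
  rw [Finset.sum_comm]
  refine Finset.sum_congr rfl fun h₂ _ => Finset.sum_congr rfl fun h₁ _ => ?_
  simp only [add_right_comm _ h₁, add_right_comm _ h₂ h₃]
  ring

lemma cubeSum_star_self :
    cubeSum (star F₀) (star F₁) (star F₂) (star F₃) F₀ F₁ F₂ F₃ =
      ((∑ h₁, ∑ h₂, ‖squareSum F₀ F₁ F₂ F₃ h₁ h₂‖ ^ 2 : ℝ) : ℂ) := by
  push_cast
  simp [cubeSum_eq_sum_squareSum_mul_squareSum, ← star_squareSum, Complex.conj_mul']

lemma norm_cubeSum_sq_le :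
    ‖cubeSum F₀ F₁ F₂ F₃ F₄ F₅ F₆ F₇‖ ^ 2 ≤
      ‖cubeSum (star F₀) (star F₁) (star F₂) (star F₃) F₀ F₁ F₂ F₃‖ *
        ‖cubeSum (star F₄) (star F₅) (star F₆) (star F₇) F₄ F₅ F₆ F₇‖ := by
  rw [cubeSum_star_self, cubeSum_star_self, Complex.norm_of_nonneg (by positivity),
    Complex.norm_of_nonneg (by positivity), cubeSum_eq_sum_squareSum_mul_squareSum]
  simp only [← Fintype.sum_prod_type']
  exact norm_sum_mul_sq_le _ _ _

lemma gowersNorm_three_eq (f : G → ℂ) :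
    gowersNorm 3 f =
      (‖cubeSum f (star f) (star f) f (star f) f f (star f)‖ / Fintype.card G ^ 4) ^ (8 : ℝ)⁻¹ := by
  simp only [gowersNorm, Fintype.sum_fin_succ_pi, Fintype.prod_fin_succ_pi, Fintype.prod_bool,
    Finset.sum_filter, Finset.card_filter, Fin.sum_univ_succ, Fin.cons_zero, Fin.cons_succ,
    Finset.univ_unique, Finset.prod_singleton, Finset.sum_singleton]
  simp only [cubeSum, Complex.star_def, Pi.star_apply, Nat.reduceAdd, ↓reduceIte,
    Fin.default_eq_zero, Fin.isValue, Fin.cons_zero, Function.iterate_succ,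
    Function.iterate_zero, Function.comp_apply, RingHomCompTriple.comp_apply, RingHom.id_apply,
    Bool.false_eq_true, add_zero, zero_add, id_eq, Complex.norm_mul, norm_inv, norm_pow,
    RCLike.norm_natCast, add_assoc, div_eq_inv_mul]
  norm_num
  congr 3
  exact Finset.sum_congr rfl fun x _ => Finset.sum_congr rfl fun h₁ _ =>
    Finset.sum_congr rfl fun h₂ _ => Finset.sum_congr rfl fun h₃ _ => by ring

end CubeSum

section CosetPhase

variable {G : Type*} [AddCommGroup G] {W : AddSubgroup G} {y : G} {φ : G → AddCircle (1 : ℝ)}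

noncomputable def cosetPhase (W : AddSubgroup G) (y : G) (φ : G → AddCircle (1 : ℝ)) : G → ℂ :=
  {x | x - y ∈ W}.indicator fun x => ee (φ x)

local notation "γ" => cosetPhase W y φ

lemma add_sub_mem_iff {x : G} (hx : x - y ∈ W) (h : G) : x + h - y ∈ W ↔ h ∈ W := by
  rw [add_sub_right_comm]; exact W.add_mem_cancel_left hx

lemma ncard_coset (W : AddSubgroup G) (y : G) : {x | x - y ∈ W}.ncard = Nat.card W := by
  rw [← Nat.card_coe_set_eq]
  exact Nat.card_congr (Equiv.subtypeEquiv (Equiv.addRight y) fun w => by simp).symm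

open scoped Classical in
lemma mul_cosetPhase_cube (hφ : IsQuadraticOn {x | x - y ∈ W} φ) (c : ℂ) (x h₁ h₂ h₃ : G) :
    c * star γ (x + h₁) * star γ (x + h₂) * γ (x + h₁ + h₂) * star γ (x + h₃) *
        γ (x + h₁ + h₃) * γ (x + h₂ + h₃) * star γ (x + h₁ + h₂ + h₃) =
      if x - y ∈ W ∧ h₁ ∈ W ∧ h₂ ∈ W ∧ h₃ ∈ W then c * ee (-φ x) else 0 := by
  by_cases hc : x - y ∈ W ∧ h₁ ∈ W ∧ h₂ ∈ W ∧ h₃ ∈ W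
  · obtain ⟨hx, hw₁, hw₂, hw₃⟩ := hc
    have m₁ := (add_sub_mem_iff hx h₁).2 hw₁
    have m₂ := (add_sub_mem_iff hx h₂).2 hw₂
    have m₃ := (add_sub_mem_iff hx h₃).2 hw₃
    have m₁₂ := (add_sub_mem_iff m₁ h₂).2 hw₂
    have m₁₃ := (add_sub_mem_iff m₁ h₃).2 hw₃
    have m₂₃ := (add_sub_mem_iff m₂ h₃).2 hw₃
    have m₁₂₃ := (add_sub_mem_iff m₁₂ h₃).2 hw₃
    have hq := hφ x h₁ h₂ h₃ fun ω₁ ω₂ ω₃ => by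
      cases ω₁ <;> cases ω₂ <;> cases ω₃ <;> simpa
    rw [if_pos ⟨hx, hw₁, hw₂, hw₃⟩]
    simp only [cosetPhase, Pi.star_apply, Set.indicator_of_mem (Set.mem_ofPred.2 _), m₁, m₂, m₃,
      m₁₂, m₁₃, m₂₃, m₁₂₃, star_ee, mul_assoc, ← ee_add]
    congr 2
    rw [eq_comm, ← sub_eq_zero, ← hq]
    abel
  · rw [if_neg hc]
    -- three vertices of a face through `x` determine `x`, hence the whole cube
    have : ¬(x + h₁ - y ∈ W ∧ x + h₂ - y ∈ W ∧ x + h₁ + h₂ - y ∈ W ∧ x + h₃ - y ∈ W) := by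
      rintro ⟨m₁, m₂, m₁₂, m₃⟩
      have hx : x - y ∈ W := by
        convert sub_mem (add_mem m₁ m₂) m₁₂ using 1; abel
      exact hc ⟨hx, (add_sub_mem_iff hx h₁).1 m₁, (add_sub_mem_iff hx h₂).1 m₂,
        (add_sub_mem_iff hx h₃).1 m₃⟩
    simp only [not_and_or] at this
    rcases this with h | h | h | h <;> simp [cosetPhase, h]

variable [Fintype G]

lemma cubeSum_cosetPhase (hφ : IsQuadraticOn {x | x - y ∈ W} φ) (F : G → ℂ) :
    cubeSum F (star γ) (star γ) γ (star γ) γ γ (star γ) =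
      (Nat.card W : ℂ) ^ 3 * ∑ x ∈ {x | x - y ∈ W}.toFinite.toFinset, F x * ee (-φ x) := by
  classical
  have sum_mem (c : ℂ) : ∑ h : G, (if h ∈ W then c else 0) = Nat.card W * c := by
    rw [← Finset.sum_filter, Finset.sum_const, nsmul_eq_mul, Nat.card_eq_fintype_card,
      Fintype.card_subtype]
  simp only [cubeSum, mul_cosetPhase_cube hφ, ite_and, Finset.sum_ite_irrel, Finset.sum_const_zero,
    sum_mem, Set.Finite.toFinset_ofPred, Finset.sum_filter, Finset.mul_sum]
  exact Finset.sum_congr rfl fun x _ => by split_ifs <;> ring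

lemma norm_cubeSum_cosetPhase (hφ : IsQuadraticOn {x | x - y ∈ W} φ) :
    ‖cubeSum γ (star γ) (star γ) γ (star γ) γ γ (star γ)‖ = (Nat.card W : ℝ) ^ 4 := by
  have phase_cancel : ∀ x ∈ {x | x - y ∈ W}.toFinite.toFinset, γ x * ee (-φ x) = 1 := by
    intro x hx
    rw [cosetPhase, Set.indicator_of_mem (by simpa using hx), ← ee_add, add_neg_cancel]
    simp [ee]
  rw [cubeSum_cosetPhase hφ, Finset.sum_congr rfl phase_cancel, Finset.sum_const,
    ← Set.ncard_eq_toFinset_card, ncard_coset]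
  simp [pow_succ]

lemma norm_cubeSum_cosetPhase_sq_le (hφ : IsQuadraticOn {x | x - y ∈ W} φ) (F₀ F₁ F₂ F₃ : G → ℂ) :
    ‖cubeSum F₀ F₁ F₂ F₃ (star γ) γ γ (star γ)‖ ^ 2 ≤
      (Nat.card W : ℝ) ^ 4 * ‖cubeSum (star F₀) (star F₁) (star F₂) (star F₃) F₀ F₁ F₂ F₃‖ := by
  have := norm_cubeSum_sq_le F₀ F₁ F₂ F₃ (star γ) γ γ (star γ)
  rwa [star_star, norm_cubeSum_cosetPhase hφ, mul_comm] at this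

theorem norm_sum_pow_eight_le (hφ : IsQuadraticOn {x | x - y ∈ W} φ) (f : G → ℂ) :
    ‖∑ x ∈ {x | x - y ∈ W}.toFinite.toFinset, f x * ee (-φ x)‖ ^ 8 ≤
      (Nat.card W : ℝ) ^ 4 * ‖cubeSum f (star f) (star f) f (star f) f f (star f)‖ := by
  set M : ℝ := (Nat.card W : ℝ)
  set D := ∑ x ∈ {x | x - y ∈ W}.toFinite.toFinset, f x * ee (-φ x)
  have hM : 0 < M := Nat.cast_pos.2 Nat.card_pos
  have h₀ : ‖cubeSum f (star γ) (star γ) γ (star γ) γ γ (star γ)‖ = M ^ 3 * ‖D‖ := by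
    rw [cubeSum_cosetPhase hφ, norm_mul, norm_pow, Complex.norm_natCast]
  -- before each Cauchy–Schwarz step, conjugate and swap two directions so that the
  -- `γ`-factors sit at the four vertices involving `h₃`
  have h₁ : ‖cubeSum f (star γ) (star γ) γ (star γ) γ γ (star γ)‖ ^ 2 ≤
      M ^ 4 * ‖cubeSum (star f) γ γ (star γ) f (star γ) (star γ) γ‖ := by
    simpa only [star_star] using norm_cubeSum_cosetPhase_sq_le hφ f (star γ) (star γ) γ
  have h₂ : ‖cubeSum (star f) γ γ (star γ) f (star γ) (star γ) γ‖ ^ 2 ≤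
      M ^ 4 * ‖cubeSum (star f) γ f (star γ) f (star γ) (star f) γ‖ := by
    rw [← norm_star, star_cubeSum, cubeSum_comm_two_three]
    simpa only [star_star] using norm_cubeSum_cosetPhase_sq_le hφ f (star γ) (star f) γ
  have h₃ : ‖cubeSum (star f) γ f (star γ) f (star γ) (star f) γ‖ ^ 2 ≤
      M ^ 4 * ‖cubeSum f (star f) (star f) f (star f) f f (star f)‖ := by
    rw [← norm_star, star_cubeSum, cubeSum_comm_one_three]
    have := norm_cubeSum_cosetPhase_sq_le hφ f (star f) (star f) f
    rw [← norm_star (cubeSum (star f) _ _ _ _ _ _ _), star_cubeSum] at this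
    simpa only [star_star] using this
  set a₀ := ‖cubeSum f (star γ) (star γ) γ (star γ) γ γ (star γ)‖
  set a₁ := ‖cubeSum (star f) γ γ (star γ) f (star γ) (star γ) γ‖
  set a₂ := ‖cubeSum (star f) γ f (star γ) f (star γ) (star f) γ‖
  set a₃ := ‖cubeSum f (star f) (star f) f (star f) f f (star f)‖
  clear_value a₀ a₁ a₂ a₃
  have key : M ^ 24 * ‖D‖ ^ 8 ≤ M ^ 24 * (M ^ 4 * a₃) :=
    calc M ^ 24 * ‖D‖ ^ 8 = (a₀ ^ 2) ^ 4 := by rw [h₀]; ring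
      _ ≤ (M ^ 4 * a₁) ^ 4 := by gcongr
      _ = M ^ 16 * (a₁ ^ 2) ^ 2 := by ring
      _ ≤ M ^ 16 * (M ^ 4 * a₂) ^ 2 := by gcongr
      _ = M ^ 24 * a₂ ^ 2 := by ring
      _ ≤ M ^ 24 * (M ^ 4 * a₃) := by gcongr
  exact le_of_mul_le_mul_left key (by positivity)

end CosetPhase

theorem inv_card_mul_card_mul_norm_expectC_le_gowersNorm {G : Type*} [AddCommGroup G] [Fintype G]
    {W : AddSubgroup G} {y : G} {φ : G → AddCircle (1 : ℝ)}
    (hφ : IsQuadraticOn {x | x - y ∈ W} φ) (f : G → ℂ) :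
    (Fintype.card G : ℝ)⁻¹ * Nat.card W * ‖expectC {x | x - y ∈ W} fun x => f x * ee (-φ x)‖ ≤
      gowersNorm 3 f := by
  have hM : (0 : ℝ) < Nat.card W := Nat.cast_pos.2 Nat.card_pos
  have hMN : (Nat.card W : ℝ) ≤ Fintype.card G := by
    rw [← Nat.card_eq_fintype_card]; exact_mod_cast Finite.card_subtype_le _
  have hD := norm_sum_pow_eight_le hφ f
  rw [expectC, ncard_coset, norm_mul, norm_inv, Complex.norm_natCast, gowersNorm_three_eq,
    Real.le_rpow_inv_iff_of_pos (by positivity) (by positivity) (by norm_num), Real.rpow_ofNat]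
  set N : ℝ := (Fintype.card G : ℝ)
  set M : ℝ := (Nat.card W : ℝ)
  set d := ‖∑ x ∈ {x | x - y ∈ W}.toFinite.toFinset, f x * ee (-φ x)‖
  set c := ‖cubeSum f (star f) (star f) f (star f) f f (star f)‖
  have hN : 0 < N := hM.trans_le hMN
  calc (N⁻¹ * M * (M⁻¹ * d)) ^ 8 = d ^ 8 / N ^ 8 := by field_simp
    _ ≤ M ^ 4 * c / N ^ 8 := by gcongr
    _ ≤ N ^ 4 * c / N ^ 8 := by gcongr
    _ = c / N ^ 4 := by field_simp

/-- **Inverse theorem for `U³(𝔽₅ⁿ)`, converse direction**: for any subspace `W ≤ 𝔽₅ⁿ`,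
any `f : 𝔽₅ⁿ → ℂ`, any `y`, and any locally quadratic phase `φ` on `y + W`,
`‖f‖_{U³(𝔽₅ⁿ)} ≥ 5^{-n} |W| · |𝔼_{x ∈ y+W} f(x) e(-φ(x))|`. -/
theorem inverse_U3_F5_converse {n : ℕ} (W : Submodule (ZMod 5) (Fin n → ZMod 5))
    (f : (Fin n → ZMod 5) → ℂ) (y : Fin n → ZMod 5)
    (φ : (Fin n → ZMod 5) → AddCircle (1 : ℝ)) (hφ : IsQuadraticOn {x | x - y ∈ W} φ) :
    ((5 : ℝ) ^ n)⁻¹ * (Nat.card W : ℝ) *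
        ‖expectC {x | x - y ∈ W} fun x => f x * ee (-(φ x))‖ ≤
      gowersNorm 3 f := by
  have hcard : (Fintype.card (Fin n → ZMod 5) : ℝ) = 5 ^ n := by simp
  have h := inv_card_mul_card_mul_norm_expectC_le_gowersNorm (W := W.toAddSubgroup) hφ f
  rw [hcard] at h
  exact h
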